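/- Let k_φ be the least k with σ_φ^{k+1}(W⁰,R⁰) = σ_φ^{k}(W⁰,R⁰), let (W^{k_φ},R^{k_φ}) := σ_φ^{k_φ}(W⁰,R⁰), and let V^{k_φ} be the valuation with V^{k_φ}(p) = {(a_1,…,a_n) ∈ W^{k_φ} : a_i = 1} whenever ψ_i = p is an atom. Then for every i ∈ {1,…,n} and every (a_1,…,a_n) ∈ W^{k_φ}: (W^{k_φ},R^{k_φ},V^{k_φ}),(a_1,…,a_n) ⊨ ψ_i if and only if a_i = 1. -/
import Mathlib


/-- Formulas of unimodal modal logic. -/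
inductive Formula : Type
  | atom : ℕ → Formula
  | falsum : Formula
  | neg : Formula → Formula
  | and : Formula → Formula → Formula
  | box : Formula → Formula
deriving DecidableEq

/-- Material implication, as the usual classical abbreviation. -/
def Formula.imp (φ ψ : Formula) : Formula := .neg (.and φ (.neg ψ))

/-- Disjunction, as the usual classical abbreviation. -/
def Formula.or (φ ψ : Formula) : Formula := .neg (.and (.neg φ) (.neg ψ))

/-- Uniform substitution of formulas for atoms. -/
def fsubst (σ : ℕ → Formula) : Formula → Formula
  | .atom q => σ q
  | .falsum => .falsum
  | .neg φ => .neg (fsubst σ φ)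
  | .and φ ψ => .and (fsubst σ φ) (fsubst σ ψ)
  | .box φ => .box (fsubst σ φ)

/-- A Boolean valuation of the modal language: a Boolean assignment respecting
`⊥`, `¬` and `∧` (boxed formulas are treated as atoms). -/
def IsBoolVal (v : Formula → Bool) : Prop :=
  v .falsum = false ∧ (∀ φ, v (.neg φ) = !(v φ)) ∧
  (∀ φ ψ, v (.and φ ψ) = (v φ && v ψ))

/-- Classical propositional tautologies of the modal language. -/
def Tautology (φ : Formula) : Prop := ∀ v, IsBoolVal v → v φ = true

/-- A modal logic: a set of formulas closed under uniform substitution and modus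
ponens, containing all classical propositional tautologies, containing the axioms
`□p∧□q→□(p∧q)` and `□⊤`, and closed under the rule: from `φ→ψ` infer `□φ→□ψ`. -/
structure IsModalLogic (L : Set Formula) : Prop where
  taut : ∀ φ, Tautology φ → φ ∈ L
  mp : ∀ φ ψ, Formula.imp φ ψ ∈ L → φ ∈ L → ψ ∈ L
  subst : ∀ φ σ, φ ∈ L → fsubst σ φ ∈ L
  axK : Formula.imp (.and (.box (.atom 0)) (.box (.atom 1)))
          (.box (.and (.atom 0) (.atom 1))) ∈ L
  axTop : Formula.box (.neg .falsum) ∈ L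
  mono : ∀ φ ψ, Formula.imp φ ψ ∈ L → Formula.imp (.box φ) (.box ψ) ∈ L

/-- An `L`-theory: a set of formulas containing `L` and closed under modus ponens. -/
def IsTheory (L Γ : Set Formula) : Prop :=
  L ⊆ Γ ∧ ∀ φ ψ, Formula.imp φ ψ ∈ Γ → φ ∈ Γ → ψ ∈ Γ

/-- A prime `L`-theory: a proper `L`-theory `Γ` (i.e. `⊥ ∉ Γ`) such that
`φ∨ψ ∈ Γ` implies `φ ∈ Γ` or `ψ ∈ Γ`. -/
def IsPrime (L Γ : Set Formula) : Prop :=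
  IsTheory L Γ ∧ Formula.falsum ∉ Γ ∧
  ∀ φ ψ, Formula.or φ ψ ∈ Γ → φ ∈ Γ ∨ ψ ∈ Γ

/-- `□Γ := {φ : □φ ∈ Γ}`. -/
def boxInv (Γ : Set Formula) : Set Formula := {φ | Formula.box φ ∈ Γ}

/-- `KDe`: the least modal logic containing `□□p → □p`. -/
def KDe : Set Formula :=
  ⋂₀ {L : Set Formula |
        IsModalLogic L ∧ Formula.imp (.box (.box (.atom 0))) (.box (.atom 0)) ∈ L}

/-- The set of subformulas of a formula. -/
def Subf : Formula → Set Formula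
  | .atom p => {.atom p}
  | .falsum => {.falsum}
  | .neg φ => insert (.neg φ) (Subf φ)
  | .and φ ψ => insert (.and φ ψ) (Subf φ ∪ Subf ψ)
  | .box φ => insert (.box φ) (Subf φ)

/-- `ψs` is an admissible enumeration of the subformulas of `φ`: it enumerates
`Σ_φ` without repetition, and components of a subformula come earlier. -/
def IsEnum (φ : Formula) {n : ℕ} (ψs : Fin n → Formula) : Prop :=
  Function.Injective ψs ∧ Set.range ψs = Subf φ ∧
  (∀ i j : Fin n, ψs i = .neg (ψs j) → j < i) ∧
  (∀ i j k : Fin n, ψs i = .and (ψs j) (ψs k) → j < i ∧ k < i) ∧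
  (∀ i j : Fin n, ψs i = .box (ψs j) → j < i)

/-- A `φ`-tip: a tuple of bits respecting the Boolean structure of the enumerated
subformulas. -/
def IsTip {n : ℕ} (ψs : Fin n → Formula) (a : Fin n → Bool) : Prop :=
  (∀ i : Fin n, ψs i = .falsum → a i = false) ∧
  (∀ i j : Fin n, ψs i = .neg (ψs j) → a i = !(a j)) ∧
  (∀ i j k : Fin n, ψs i = .and (ψs j) (ψs k) → a i = (a j && a k))

/-- `W⁰`: the set of all `φ`-tips. -/
def tips {n : ℕ} (ψs : Fin n → Formula) : Set (Fin n → Bool) := {a | IsTip ψs a}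

/-- `R⁰`: the relation on `W⁰` with `a R⁰ b` iff whenever `ψ_i = □ψ_j` and `a_i = 1`
then `b_j = 1`. -/
def R0 {n : ℕ} (ψs : Fin n → Formula) (a b : Fin n → Bool) : Prop :=
  a ∈ tips ψs ∧ b ∈ tips ψs ∧
  ∀ i j : Fin n, ψs i = .box (ψs j) → a i = true → b j = true

open Classical in
/-- `τ_φ(s)`: the tuple of bits recording which enumerated subformulas belong to the
theory `s`. -/
noncomputable def tipOf {n : ℕ} (ψs : Fin n → Formula) (s : Set Formula) :
    Fin n → Bool :=
  fun i => if ψs i ∈ s then true else false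

/-- A `φ`-clip: `(W,R)` with `W ⊆ W⁰`, `R` a relation on `W` included in `R⁰`,
containing the tips of all prime `KDe`-theories and the `R`-edges coming from
the canonical relation between prime `KDe`-theories. -/
structure IsClip {n : ℕ} (ψs : Fin n → Formula)
    (W : Set (Fin n → Bool)) (R : (Fin n → Bool) → (Fin n → Bool) → Prop) : Prop where
  wsub : W ⊆ tips ψs
  rmem : ∀ a b, R a b → a ∈ W ∧ b ∈ W
  rsub : ∀ a b, R a b → R0 ψs a b
  tmem : ∀ s : Set Formula, IsPrime KDe s → tipOf ψs s ∈ W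
  tedge : ∀ s t : Set Formula, IsPrime KDe s → IsPrime KDe t → boxInv s ⊆ t →
    R (tipOf ψs s) (tipOf ψs t)

/-- The set of worlds of `σ_φ(W,R)`. -/
def sigmaW {n : ℕ} (ψs : Fin n → Formula) (W : Set (Fin n → Bool))
    (R : (Fin n → Bool) → (Fin n → Bool) → Prop) : Set (Fin n → Bool) :=
  {a | a ∈ W ∧ ∀ i j : Fin n, ψs i = .box (ψs j) → a i = false →
         ∃ b ∈ W, R a b ∧ b j = false}

/-- The relation of `σ_φ(W,R)`: `a R' b` iff `a, b` survive in `σ_φ(W,R)`, `a R b`,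
and there is `c ∈ W` with `a R c` and `c R b`. -/
def sigmaR {n : ℕ} (ψs : Fin n → Formula) (W : Set (Fin n → Bool))
    (R : (Fin n → Bool) → (Fin n → Bool) → Prop) :
    (Fin n → Bool) → (Fin n → Bool) → Prop :=
  fun a b => a ∈ sigmaW ψs W R ∧ b ∈ sigmaW ψs W R ∧ R a b ∧
    ∃ c ∈ W, R a c ∧ R c b

/-- `σ_φ` as an operation on pairs `(W,R)`. -/
def sigmaPair {n : ℕ} (ψs : Fin n → Formula) :
    Set (Fin n → Bool) × ((Fin n → Bool) → (Fin n → Bool) → Prop) →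
    Set (Fin n → Bool) × ((Fin n → Bool) → (Fin n → Bool) → Prop) :=
  fun X => (sigmaW ψs X.1 X.2, sigmaR ψs X.1 X.2)

/-- The initial pair `(W⁰, R⁰)`. -/
def X0 {n : ℕ} (ψs : Fin n → Formula) :
    Set (Fin n → Bool) × ((Fin n → Bool) → (Fin n → Bool) → Prop) :=
  (tips ψs, R0 ψs)

/-- Satisfaction of a formula at a world of a model `(W, R, V)`. -/
def Sat {W : Type} (R : W → W → Prop) (V : ℕ → Set W) : W → Formula → Prop
  | w, .atom p => w ∈ V p
  | _, .falsum => False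
  | w, .neg φ => ¬ Sat R V w φ
  | w, .and φ ψ => Sat R V w φ ∧ Sat R V w ψ
  | w, .box φ => ∀ v, R w v → Sat R V v φ

lemma subf_self : ∀ ρ : Formula, ρ ∈ Subf ρ := by
  intro ρ; cases ρ <;> simp [Subf]

lemma subf_neg {ρ χ : Formula} (h : Formula.neg χ ∈ Subf ρ) : χ ∈ Subf ρ := by
  induction ρ with
  | atom p => simp [Subf] at h
  | falsum => simp [Subf] at h
  | neg ψ ih =>
    simp only [Subf, Set.mem_insert_iff] at h ⊢
    rcases h with h | h
    · injection h with h; subst h; exact Or.inr (subf_self _)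
    · exact Or.inr (ih h)
  | and ψ₁ ψ₂ ih₁ ih₂ =>
    simp only [Subf, Set.mem_insert_iff, Set.mem_union] at h ⊢
    rcases h with h | h | h
    · exact absurd h (by simp)
    · exact Or.inr (Or.inl (ih₁ h))
    · exact Or.inr (Or.inr (ih₂ h))
  | box ψ ih =>
    simp only [Subf, Set.mem_insert_iff] at h ⊢
    rcases h with h | h
    · exact absurd h (by simp)
    · exact Or.inr (ih h)

lemma subf_and {ρ χ₁ χ₂ : Formula} (h : Formula.and χ₁ χ₂ ∈ Subf ρ) :
    χ₁ ∈ Subf ρ ∧ χ₂ ∈ Subf ρ := by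
  induction ρ with
  | atom p => simp [Subf] at h
  | falsum => simp [Subf] at h
  | neg ψ ih =>
    simp only [Subf, Set.mem_insert_iff] at h ⊢
    rcases h with h | h
    · exact absurd h (by simp)
    · exact ⟨Or.inr (ih h).1, Or.inr (ih h).2⟩
  | and ψ₁ ψ₂ ih₁ ih₂ =>
    simp only [Subf, Set.mem_insert_iff, Set.mem_union] at h ⊢
    rcases h with h | h | h
    · injection h with h1 h2; subst h1; subst h2
      exact ⟨Or.inr (Or.inl (subf_self _)), Or.inr (Or.inr (subf_self _))⟩
    · exact ⟨Or.inr (Or.inl (ih₁ h).1), Or.inr (Or.inl (ih₁ h).2)⟩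
    · exact ⟨Or.inr (Or.inr (ih₂ h).1), Or.inr (Or.inr (ih₂ h).2)⟩
  | box ψ ih =>
    simp only [Subf, Set.mem_insert_iff] at h ⊢
    rcases h with h | h
    · exact absurd h (by simp)
    · exact ⟨Or.inr (ih h).1, Or.inr (ih h).2⟩

lemma subf_box {ρ χ : Formula} (h : Formula.box χ ∈ Subf ρ) : χ ∈ Subf ρ := by
  induction ρ with
  | atom p => simp [Subf] at h
  | falsum => simp [Subf] at h
  | neg ψ ih =>
    simp only [Subf, Set.mem_insert_iff] at h ⊢
    rcases h with h | h
    · exact absurd h (by simp)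
    · exact Or.inr (ih h)
  | and ψ₁ ψ₂ ih₁ ih₂ =>
    simp only [Subf, Set.mem_insert_iff, Set.mem_union] at h ⊢
    rcases h with h | h | h
    · exact absurd h (by simp)
    · exact Or.inr (Or.inl (ih₁ h))
    · exact Or.inr (Or.inr (ih₂ h))
  | box ψ ih =>
    simp only [Subf, Set.mem_insert_iff] at h ⊢
    rcases h with h | h
    · injection h with h; subst h; exact Or.inr (subf_self _)
    · exact Or.inr (ih h)

lemma iter_sub {n : ℕ} (ψs : Fin n → Formula) (m : ℕ) :
    ((sigmaPair ψs)^[m] (X0 ψs)).1 ⊆ tips ψs ∧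
    ∀ a b, ((sigmaPair ψs)^[m] (X0 ψs)).2 a b → R0 ψs a b := by
  induction m with
  | zero => exact ⟨fun a h => h, fun a b h => h⟩
  | succ m ih =>
    rw [Function.iterate_succ_apply']
    exact ⟨fun a ha => ih.1 ha.1, fun a b h => ih.2 a b h.2.2.1⟩

/-- Truth lemma for the fixpoint model: with `(W^{k_φ},R^{k_φ}) = σ_φ^{k_φ}(W⁰,R⁰)`
and the valuation `V^{k_φ}(p) = {a ∈ W^{k_φ} : a_i = 1}` whenever `ψ_i = p`, a
subformula `ψ_i` is satisfied at a tip `a ∈ W^{k_φ}` iff `a_i = 1`. -/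
theorem stmt12 (φ : Formula) {n : ℕ} (ψs : Fin n → Formula) (henum : IsEnum φ ψs)
    (k : ℕ)
    (hfix : (sigmaPair ψs)^[k + 1] (X0 ψs) = (sigmaPair ψs)^[k] (X0 ψs))
    (hleast : ∀ j : ℕ, (sigmaPair ψs)^[j + 1] (X0 ψs) = (sigmaPair ψs)^[j] (X0 ψs) →
      k ≤ j)
    (V : ℕ → Set (Fin n → Bool))
    (hV : ∀ (p : ℕ) (i : Fin n), ψs i = .atom p →
      V p = {a | a ∈ ((sigmaPair ψs)^[k] (X0 ψs)).1 ∧ a i = true}) :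
    ∀ (i : Fin n) (a : Fin n → Bool), a ∈ ((sigmaPair ψs)^[k] (X0 ψs)).1 →
      (Sat ((sigmaPair ψs)^[k] (X0 ψs)).2 V a (ψs i) ↔ a i = true) := by
  obtain ⟨hinj, hrange, hneg, hand, hbox⟩ := henum
  have hstep : (sigmaPair ψs)^[k+1] (X0 ψs) =
      sigmaPair ψs ((sigmaPair ψs)^[k] (X0 ψs)) := Function.iterate_succ_apply' _ _ _
  rw [hstep] at hfix
  set W := ((sigmaPair ψs)^[k] (X0 ψs)).1 with hW
  set R := ((sigmaPair ψs)^[k] (X0 ψs)).2 with hR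
  have hfixW : sigmaW ψs W R = W := congrArg Prod.fst hfix
  have hfixR : sigmaR ψs W R = R := congrArg Prod.snd hfix
  have htips : W ⊆ tips ψs := (iter_sub ψs k).1
  have hR0 : ∀ a b, R a b → R0 ψs a b := (iter_sub ψs k).2
  have hmem : ∀ χ, χ ∈ Subf φ → ∃ j : Fin n, ψs j = χ := by
    intro χ hχ; rw [← hrange] at hχ; exact hχ
  suffices main : ∀ m : ℕ, ∀ i : Fin n, i.val = m → ∀ a, a ∈ W →
      (Sat R V a (ψs i) ↔ a i = true) by
    intro i; exact main i.val i rfl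
  intro m
  induction m using Nat.strong_induction_on with
  | _ m ih' =>
    intro i him
    have ih : ∀ j : Fin n, j < i → ∀ a, a ∈ W →
        (Sat R V a (ψs j) ↔ a j = true) :=
      fun j hj => ih' j.val (him ▸ hj) j rfl
    intro a ha
    have hatip : IsTip ψs a := htips ha
    have hiS : ψs i ∈ Subf φ := by rw [← hrange]; exact ⟨i, rfl⟩
    match h : ψs i with
    | .atom p =>
      rw [Sat]
      rw [hV p i h]
      exact ⟨fun hp => hp.2, fun hp => ⟨ha, hp⟩⟩
    | .falsum =>
      rw [Sat]
      simp [hatip.1 i h]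
    | .neg χ =>
      obtain ⟨j, hj⟩ := hmem χ (subf_neg (h ▸ hiS))
      subst hj
      have hlt := hneg i j h
      have hval := hatip.2.1 i j h
      rw [Sat]
      rw [ih j hlt a ha, hval]
      cases a j <;> simp
    | .and χ₁ χ₂ =>
      obtain ⟨j₁, hj₁⟩ := hmem χ₁ (subf_and (h ▸ hiS)).1
      obtain ⟨j₂, hj₂⟩ := hmem χ₂ (subf_and (h ▸ hiS)).2
      subst hj₁; subst hj₂
      obtain ⟨hlt₁, hlt₂⟩ := hand i j₁ j₂ h
      have hval := hatip.2.2 i j₁ j₂ h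
      rw [Sat]
      rw [ih j₁ hlt₁ a ha, ih j₂ hlt₂ a ha, hval]
      cases a j₁ <;> cases a j₂ <;> simp
    | .box χ =>
      obtain ⟨j, hj⟩ := hmem χ (subf_box (h ▸ hiS))
      subst hj
      have hlt := hbox i j h
      rw [Sat]
      constructor
      · intro hsat
        by_contra hai
        have hai' : a i = false := by cases hc : a i <;> simp_all
        have ha' : a ∈ sigmaW ψs W R := by rw [hfixW]; exact ha
        obtain ⟨b, hbW, hRab, hbj⟩ := ha'.2 i j h hai'
        have : b j = true := (ih j hlt b hbW).1 (hsat b hRab)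
        simp [this] at hbj
      · intro hai b hRab
        have hbW : b ∈ W := by
          rw [← hfixR] at hRab
          rw [← hfixW]; exact hRab.2.1
        exact (ih j hlt b hbW).2 ((hR0 a b hRab).2.2 i j h hai)
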